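/- Let P and B be orthogonal projections on a Hilbert space, and let ψ₁,…,ψₙ be unit vectors satisfying ‖(Id − PBP)ψ_ν‖ ≤ 3ε for all ν and |⟨ψ_ν,ψ_μ⟩| ≤ ε for ν ≠ μ, with εn < 1/2. Then for every nonzero ψ in the span of ψ₁,…,ψₙ, one has ‖PBPψ‖/‖ψ‖ ≥ 1 − 3ε n^{1/2}(1 − nε)^{−1/2} ≥ 1 − 5ε n^{1/2}. -/

import Mathlib

/-! Write `ψ = ∑ a_ν ψ_ν` and `S = ∑ |a_ν|²`. Almost orthogonality bounds the Gram form from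
below, `‖ψ‖² ≥ S - ε (∑ |a_ν|)² ≥ (1 - nε) S`, while the triangle inequality gives
`‖ψ - PBPψ‖ ≤ 3ε ∑ |a_ν| ≤ 3ε √n √S`. Eliminating `S` yields the first bound; the second is
`(1 - nε)^{-1/2} < √2 < 5/3`. -/

open scoped InnerProductSpace

open Finset RCLike ComplexConjugate

theorem norm_map_sum_smul_le {𝕜 E F ι : Type*} [NormedField 𝕜] [SeminormedAddCommGroup E]
    [NormedSpace 𝕜 E] [SeminormedAddCommGroup F] [NormedSpace 𝕜 F] [Fintype ι]
    (L : E →ₗ[𝕜] F) {ψ : ι → E} {δ : ℝ} (hL : ∀ i, ‖L (ψ i)‖ ≤ δ) (a : ι → 𝕜) :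
    ‖L (∑ i, a i • ψ i)‖ ≤ δ * ∑ i, ‖a i‖ := by
  rw [map_sum, mul_sum]
  refine norm_sum_le_of_le _ fun i _ => ?_
  rw [map_smul, norm_smul, mul_comm]
  exact mul_le_mul_of_nonneg_right (hL i) (norm_nonneg _)

section AlmostOrthonormal

variable {𝕜 E ι : Type*} [RCLike 𝕜] [NormedAddCommGroup E] [InnerProductSpace 𝕜 E] [Fintype ι]
  {ψ : ι → E} {ε : ℝ}

theorem norm_inner_sum_smul_sub_le (hε : 0 ≤ ε) (hunit : ∀ i, ‖ψ i‖ = 1)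
    (hsmall : ∀ i j, i ≠ j → ‖⟪ψ i, ψ j⟫_𝕜‖ ≤ ε) (a : ι → 𝕜) (i : ι) :
    ‖⟪ψ i, ∑ j, a j • ψ j⟫_𝕜 - a i‖ ≤ ε * ∑ j, ‖a j‖ := by
  classical
  calc ‖⟪ψ i, ∑ j, a j • ψ j⟫_𝕜 - a i‖ = ‖∑ j ∈ univ.erase i, a j * ⟪ψ i, ψ j⟫_𝕜‖ := by
        simp only [inner_sum, inner_smul_right]
        rw [← add_sum_erase _ _ (mem_univ i), inner_self_eq_norm_sq_to_K, hunit]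
        simp
    _ ≤ ∑ j ∈ univ.erase i, ‖a j‖ * ε := by
        refine norm_sum_le_of_le _ fun j hj => ?_
        rw [norm_mul]
        gcongr
        exact hsmall i j (ne_of_mem_erase hj).symm
    _ ≤ ε * ∑ j, ‖a j‖ := by
        rw [← sum_mul, mul_comm]
        exact mul_le_mul_of_nonneg_left
          (sum_le_sum_of_subset_of_nonneg (erase_subset _ _) fun j _ _ => norm_nonneg (a j)) hε

theorem re_conj_mul_ge (a w : 𝕜) : ‖a‖ ^ 2 - ‖a‖ * ‖w - a‖ ≤ re (conj a * w) := by
  have hsplit : conj a * w = conj a * a + conj a * (w - a) := by ring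
  have hre : re (conj a * a) = ‖a‖ ^ 2 := by rw [RCLike.conj_mul]; norm_cast
  have herr : -(‖a‖ * ‖w - a‖) ≤ re (conj a * (w - a)) :=
    neg_le_of_abs_le ((abs_re_le_norm _).trans_eq (by rw [norm_mul, norm_conj]))
  rw [hsplit, map_add, hre]
  linarith

theorem sum_norm_sq_sub_le_norm_sum_smul_sq (hε : 0 ≤ ε) (hunit : ∀ i, ‖ψ i‖ = 1)
    (hsmall : ∀ i j, i ≠ j → ‖⟪ψ i, ψ j⟫_𝕜‖ ≤ ε) (a : ι → 𝕜) :
    ∑ i, ‖a i‖ ^ 2 - ε * (∑ i, ‖a i‖) ^ 2 ≤ ‖∑ i, a i • ψ i‖ ^ 2 := by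
  set v := ∑ i, a i • ψ i
  calc ∑ i, ‖a i‖ ^ 2 - ε * (∑ i, ‖a i‖) ^ 2
      = ∑ i, (‖a i‖ ^ 2 - ‖a i‖ * (ε * ∑ j, ‖a j‖)) := by
        rw [sum_sub_distrib, ← sum_mul, sq (∑ i, ‖a i‖)]; ring
    _ ≤ ∑ i, re (conj (a i) * ⟪ψ i, v⟫_𝕜) := by
        gcongr with i
        exact (sub_le_sub_left (by gcongr; exact norm_inner_sum_smul_sub_le hε hunit hsmall a i)
          _).trans (re_conj_mul_ge _ _)
    _ = ‖v‖ ^ 2 := by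
        rw [← inner_self_eq_norm_sq (𝕜 := 𝕜), ← map_sum]
        simp only [v, sum_inner, inner_smul_left]

theorem sum_norm_le_sqrt_card_mul_norm_sum_smul_div (hε : 0 ≤ ε) (hunit : ∀ i, ‖ψ i‖ = 1)
    (hsmall : ∀ i j, i ≠ j → ‖⟪ψ i, ψ j⟫_𝕜‖ ≤ ε) (hcard : Fintype.card ι * ε < 1) (a : ι → 𝕜) :
    ∑ i, ‖a i‖ ≤ √(Fintype.card ι) * ‖∑ i, a i • ψ i‖ / √(1 - Fintype.card ι * ε) := by
  set n : ℝ := (Fintype.card ι : ℝ)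
  set A := ∑ i, ‖a i‖
  set S := ∑ i, ‖a i‖ ^ 2
  have hCS : A ^ 2 ≤ n * S := by simpa using sq_sum_le_card_mul_sum_sq (s := univ) (f := (‖a ·‖))
  have hgram := sum_norm_sq_sub_le_norm_sum_smul_sq hε hunit hsmall a
  have ht : 0 < 1 - n * ε := by linarith
  rw [le_div_iff₀ (Real.sqrt_pos.2 ht), ← sq_le_sq₀ (by positivity) (by positivity), mul_pow,
    mul_pow, Real.sq_sqrt ht.le, Real.sq_sqrt (Nat.cast_nonneg _)]
  nlinarith

theorem one_sub_mul_sqrt_div_le_norm_apply_div_norm (T : E →ₗ[𝕜] E) {δ : ℝ} (hε : 0 ≤ ε)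
    (hunit : ∀ i, ‖ψ i‖ = 1) (hsmall : ∀ i j, i ≠ j → ‖⟪ψ i, ψ j⟫_𝕜‖ ≤ ε)
    (hT : ∀ i, ‖ψ i - T (ψ i)‖ ≤ δ) (hcard : Fintype.card ι * ε < 1)
    {v : E} (hv : v ∈ Submodule.span 𝕜 (Set.range ψ)) (hv0 : v ≠ 0) :
    1 - δ * √(Fintype.card ι) / √(1 - Fintype.card ι * ε) ≤ ‖T v‖ / ‖v‖ := by
  obtain ⟨a, rfl⟩ := (Submodule.mem_span_range_iff_exists_fun 𝕜).mp hv
  obtain ⟨i⟩ : Nonempty ι := by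
    by_contra hι
    simp [not_nonempty_iff.mp hι] at hv0
  have hδ : 0 ≤ δ := (norm_nonneg _).trans (hT i)
  have hdiff := norm_map_sum_smul_le (LinearMap.id - T) hT a
  have hsum := sum_norm_le_sqrt_card_mul_norm_sum_smul_div hε hunit hsmall hcard a
  have htri := norm_sub_norm_le (∑ i, a i • ψ i) (T (∑ i, a i • ψ i))
  simp only [LinearMap.sub_apply, LinearMap.id_apply] at hdiff
  have hdefect := hdiff.trans (mul_le_mul_of_nonneg_left hsum hδ)
  rw [le_div_iff₀ (norm_pos_iff.mpr hv0)]
  calc (1 - δ * √(Fintype.card ι) / √(1 - Fintype.card ι * ε)) * ‖∑ i, a i • ψ i‖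
      = ‖∑ i, a i • ψ i‖ - δ * (√(Fintype.card ι) * ‖∑ i, a i • ψ i‖ /
          √(1 - Fintype.card ι * ε)) := by ring
    _ ≤ ‖T (∑ i, a i • ψ i)‖ := by linarith

end AlmostOrthonormal

theorem Real.rpow_neg_one_half {x : ℝ} (hx : 0 ≤ x) : x ^ (-(1 : ℝ) / 2) = (√x)⁻¹ := by
  rw [neg_div, Real.rpow_neg hx, Real.sqrt_eq_rpow]

theorem stmt4_general {H : Type*} [NormedAddCommGroup H] [InnerProductSpace ℂ H]
    (P B : H →L[ℂ] H)
    (n : ℕ) (ψ : Fin n → H) (ε : ℝ) (hε : 0 ≤ ε)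
    (hunit : ∀ ν, ‖ψ ν‖ = 1)
    (hconc : ∀ ν, ‖ψ ν - P (B (P (ψ ν)))‖ ≤ 3 * ε)
    (hsmall : ∀ ν μ, ν ≠ μ → ‖(⟪ψ ν, ψ μ⟫_ℂ : ℂ)‖ ≤ ε)
    (hεn : ε * n < 1 / 2) :
    ∀ v ∈ Submodule.span ℂ (Set.range ψ), v ≠ 0 →
      1 - 3 * ε * Real.sqrt n * (1 - n * ε) ^ (-(1:ℝ)/2) ≤ ‖P (B (P v))‖ / ‖v‖ ∧
      1 - 5 * ε * Real.sqrt n ≤ 1 - 3 * ε * Real.sqrt n * (1 - n * ε) ^ (-(1:ℝ)/2) := by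
  intro v hv hv0
  have ht : 1 / 2 < 1 - n * ε := by linarith
  have hbound := one_sub_mul_sqrt_div_le_norm_apply_div_norm (P ∘L B ∘L P : H →L[ℂ] H).toLinearMap
    hε hunit hsmall hconc (by rw [Fintype.card_fin]; linarith) hv hv0
  simp only [Fintype.card_fin] at hbound
  rw [Real.rpow_neg_one_half (by linarith)]
  refine ⟨by simpa [div_eq_mul_inv, mul_assoc] using hbound, ?_⟩
  have hsqrt : 3 / 5 ≤ √(1 - n * ε) := Real.le_sqrt_of_sq_le (by linarith)
  have hinv : (√(1 - n * ε))⁻¹ ≤ 5 / 3 := by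
    rw [inv_le_comm₀ (by linarith) (by norm_num)]; linarith
  nlinarith [mul_nonneg hε (Real.sqrt_nonneg n)]

/-- For orthogonal projections `P, B` and almost-orthogonal unit vectors
`ψ₁,…,ψₙ` with `‖(Id − PBP)ψν‖ ≤ 3ε` and `εn < 1/2`, every nonzero `ψ` in the span
satisfies `‖PBPψ‖/‖ψ‖ ≥ 1 − 3εn^{1/2}(1−nε)^{−1/2} ≥ 1 − 5εn^{1/2}`. -/
theorem stmt4 {H : Type*} [NormedAddCommGroup H] [InnerProductSpace ℂ H] [CompleteSpace H]
    (P B : H →L[ℂ] H)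
    (hPsa : IsSelfAdjoint P) (hPidem : P ∘L P = P)
    (hBsa : IsSelfAdjoint B) (hBidem : B ∘L B = B)
    (n : ℕ) (ψ : Fin n → H) (ε : ℝ) (hε : 0 ≤ ε)
    (hunit : ∀ ν, ‖ψ ν‖ = 1)
    (hconc : ∀ ν, ‖ψ ν - P (B (P (ψ ν)))‖ ≤ 3 * ε)
    (hsmall : ∀ ν μ, ν ≠ μ → ‖(⟪ψ ν, ψ μ⟫_ℂ : ℂ)‖ ≤ ε)
    (hεn : ε * n < 1 / 2) :
    ∀ v ∈ Submodule.span ℂ (Set.range ψ), v ≠ 0 →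
      1 - 3 * ε * Real.sqrt n * (1 - n * ε) ^ (-(1:ℝ)/2) ≤ ‖P (B (P v))‖ / ‖v‖ ∧
      1 - 5 * ε * Real.sqrt n ≤ 1 - 3 * ε * Real.sqrt n * (1 - n * ε) ^ (-(1:ℝ)/2) :=
  stmt4_general P B n ψ ε hε hunit hconc hsmall hεn
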